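/- arXiv:2207.00759 — 3 statements merged into one kernel-verified Lean document; each statement's English description precedes it below -/
import Mathlib

section
/- For every fully connected ReLU network N with a single output neuron there exists a fully connected ReLU network N' with the same number of layers that computes the same function (N'(x) = N(x) for every input x ∈ ℝ^{n_0}), has at most twice as many neurons in each hidden layer as N, and in which every hidden neuron is classified: for every hidden layer i and every neuron index j, the suffix function S_i^{N'} is either monotone nondecreasing in its j-th coordinate (neuron (i,j) is inc) or monotone nonincreasing in its j-th coordinate (neuron (i,j) is dec). -/
noncomputable section

/-- The ReLU activation function. -/
def relu (t : ℝ) : ℝ := max t 0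

/-- A fully connected feedforward network with `L + 1` layers `0, 1, …, L`
(layer `0` is the input layer, layer `L` the output layer, layers
`1, …, L - 1` the hidden layers).  `n i` is the size of layer `i` (its neurons
are the indices `< n i`); `W i q p` is the weight of the edge from neuron `p`
of layer `i - 1` to neuron `q` of layer `i` (for `1 ≤ i ≤ L`), and `b i q` is
the bias of neuron `q` of layer `i`. -/
structure Net where
  L : ℕ
  n : ℕ → ℕ
  W : ℕ → ℕ → ℕ → ℝ
  b : ℕ → ℕ → ℝ

namespace Net

/-- `act N x i q` : the value `v_{i,q}(x)` of neuron `q` of layer `i` on input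
`x` (`v_0 = x`, and ReLU is applied at every layer `i ≥ 1`). -/
def act (N : Net) (x : ℕ → ℝ) : ℕ → ℕ → ℝ
  | 0 => x
  | i + 1 => fun q =>
      relu ((∑ p ∈ Finset.range (N.n i), N.W (i + 1) q p * Net.act N x i p) + N.b (i + 1) q)

/-- The (single, index `0`) output of the network: the output layer is affine
(no ReLU): `N(x) = W_L v_{L-1}(x) + b_L`. -/
def out (N : Net) (x : ℕ → ℝ) : ℝ :=
  (∑ p ∈ Finset.range (N.n (N.L - 1)), N.W N.L 0 p * N.act x (N.L - 1) p) + N.b N.L 0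

/-- Auxiliary suffix evaluation, with explicit fuel `d = L - 1 - i`. -/
def suffixAux (N : Net) : ℕ → ℕ → (ℕ → ℝ) → ℝ
  | 0, i, u => (∑ p ∈ Finset.range (N.n i), N.W (i + 1) 0 p * u p) + N.b (i + 1) 0
  | d + 1, i, u =>
      Net.suffixAux N d (i + 1) fun q =>
        relu ((∑ p ∈ Finset.range (N.n i), N.W (i + 1) q p * u p) + N.b (i + 1) q)

/-- The suffix function `S_i^N : ℝ^{n_i} → ℝ` (meaningful for `1 ≤ i ≤ L - 1`):
`S_{L-1}(u) = W_L u + b_L` and `S_i(u) = S_{i+1}(σ(W_{i+1} u + b_{i+1}))`. -/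
def suffix (N : Net) (i : ℕ) (u : ℕ → ℝ) : ℝ := N.suffixAux (N.L - 1 - i) i u

end Net

/-- `f` is monotone nondecreasing in coordinate `j`. -/
def MonoIncAt (f : (ℕ → ℝ) → ℝ) (j : ℕ) : Prop :=
  ∀ (u : ℕ → ℝ) (a a' : ℝ), a ≤ a' → f (Function.update u j a) ≤ f (Function.update u j a')

/-- `f` is monotone nonincreasing in coordinate `j`. -/
def MonoDecAt (f : (ℕ → ℝ) → ℝ) (j : ℕ) : Prop :=
  ∀ (u : ℕ → ℝ) (a a' : ℝ), a ≤ a' → f (Function.update u j a') ≤ f (Function.update u j a)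

/-- Hidden neuron `(i, j)` is `inc`: the suffix function `S_i` is monotone
nondecreasing in coordinate `j`. -/
def Net.Inc (N : Net) (i j : ℕ) : Prop := MonoIncAt (N.suffix i) j

/-- Hidden neuron `(i, j)` is `dec`: the suffix function `S_i` is monotone
nonincreasing in coordinate `j`. -/
def Net.Dec (N : Net) (i j : ℕ) : Prop := MonoDecAt (N.suffix i) j

/-!
Split every hidden neuron into an even and an odd copy computing the same activation. An edge
between copies of equal parity gets the positive part of the original weight, an edge between
copies of different parity the negative part, and the two parts add back up to the original
weight, so the function is unchanged. The output neuron counts as even. Then increasing an even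
neuron (or decreasing an odd one) can only increase the even neurons and decrease the odd neurons
of the next layer, hence the output: even neurons are inc and odd neurons are dec.
-/

lemma Finset.sum_range_two_mul {M : Type*} [AddCommMonoid M] (m : ℕ) (f : ℕ → M) :
    ∑ p ∈ Finset.range (2 * m), f p = ∑ p ∈ Finset.range m, (f (2 * p) + f (2 * p + 1)) := by
  induction m with
  | zero => simp
  | succ m ih =>
    rw [show 2 * (m + 1) = 2 * m + 1 + 1 by ring, Finset.sum_range_succ, Finset.sum_range_succ,
      Finset.sum_range_succ, ih, add_assoc]

lemma relu_mono : Monotone relu := fun _ _ h => max_le_max h le_rfl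

def signSplit (w : ℝ) (k : ℕ) : ℝ := if Even k then max w 0 else min w 0

lemma signSplit_add_signSplit_succ (w : ℝ) (k : ℕ) :
    signSplit w k + signSplit w (k + 1) = w := by
  by_cases hk : Even k
  · simp [signSplit, hk, Nat.even_add_one, max_add_min]
  · simp [signSplit, hk, Nat.even_add_one, add_comm, max_add_min]

lemma sum_signSplit_mul_halves (m q : ℕ) (w a : ℕ → ℝ) :
    ∑ p ∈ Finset.range (2 * m), signSplit (w (p / 2)) (q + p) * a (p / 2)
      = ∑ p ∈ Finset.range m, w p * a p := by
  rw [Finset.sum_range_two_mul]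
  refine Finset.sum_congr rfl fun p _ => ?_
  rw [show (2 * p + 1) / 2 = p by omega, show 2 * p / 2 = p by omega, ← add_mul, ← add_assoc,
    signSplit_add_signSplit_succ]

lemma sum_signSplit_mul_le {s : Finset ℕ} {w u u' : ℕ → ℝ} {q : ℕ}
    (h : ∀ p, (Even (q + p) → u p ≤ u' p) ∧ (¬Even (q + p) → u' p ≤ u p)) :
    ∑ p ∈ s, signSplit (w p) (q + p) * u p ≤ ∑ p ∈ s, signSplit (w p) (q + p) * u' p := by
  refine Finset.sum_le_sum fun p _ => ?_
  by_cases hp : Even (q + p)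
  · simp only [signSplit, if_pos hp]
    exact mul_le_mul_of_nonneg_left ((h p).1 hp) (le_max_right _ _)
  · simp only [signSplit, if_neg hp]
    exact mul_le_mul_of_nonpos_left ((h p).2 hp) (min_le_right _ _)

def AltLE (u u' : ℕ → ℝ) : Prop := ∀ p, (Even p → u p ≤ u' p) ∧ (¬Even p → u' p ≤ u p)

lemma AltLE.relu_layer {u u' : ℕ → ℝ} (h : AltLE u u') (s : Finset ℕ) (w : ℕ → ℕ → ℝ)
    (b : ℕ → ℝ) :
    AltLE (fun q => relu (∑ p ∈ s, signSplit (w q p) (q + p) * u p + b q))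
      (fun q => relu (∑ p ∈ s, signSplit (w q p) (q + p) * u' p + b q)) := by
  intro q
  constructor
  · intro hq
    refine relu_mono (add_le_add_left (sum_signSplit_mul_le fun p => ?_) _)
    rw [show Even (q + p) ↔ Even p by simp [Nat.even_add, hq]]
    exact h p
  · intro hq
    refine relu_mono (add_le_add_left (sum_signSplit_mul_le fun p => ?_) _)
    rw [show Even (q + p) ↔ ¬Even p by simp [Nat.even_add, hq], not_not]
    exact (h p).symm

lemma altLE_update (u : ℕ → ℝ) {j : ℕ} {a a' : ℝ}
    (h : (Even j → a ≤ a') ∧ (¬Even j → a' ≤ a)) :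
    AltLE (Function.update u j a) (Function.update u j a') := by
  intro p
  rcases eq_or_ne p j with rfl | hp
  · simpa using h
  · simp [Function.update_of_ne hp]

namespace Net

variable (N : Net)

/-- `N.preact x i q` is the input of neuron `q` of layer `i + 1` before the activation. -/
def preact (x : ℕ → ℝ) (i q : ℕ) : ℝ :=
  ∑ p ∈ Finset.range (N.n i), N.W (i + 1) q p * N.act x i p + N.b (i + 1) q

lemma act_succ (x : ℕ → ℝ) (i q : ℕ) : N.act x (i + 1) q = relu (N.preact x i q) := rfl

lemma out_eq_preact (hL : 1 ≤ N.L) (x : ℕ → ℝ) : N.out x = N.preact x (N.L - 1) 0 := by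
  unfold out preact
  rw [Nat.sub_add_cancel hL]

/-- Neuron `q` of a hidden layer of `N.split` is a copy of neuron `q / 2` of `N`; the same
formulas serve the output layer, whose neuron `0` is its own copy `0 / 2`. -/
def split : Net where
  L := N.L
  n i := if 0 < i ∧ i < N.L then 2 * N.n i else N.n i
  W i q p := if i = 1 then N.W 1 (q / 2) p else signSplit (N.W i (q / 2) (p / 2)) (q + p)
  b i q := N.b i (q / 2)

@[simp] lemma split_L : N.split.L = N.L := rfl

lemma split_n_of_pos_of_lt {i : ℕ} (h0 : 0 < i) (hi : i < N.L) : N.split.n i = 2 * N.n i :=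
  if_pos ⟨h0, hi⟩

lemma split_n_zero : N.split.n 0 = N.n 0 := by simp [split]

lemma split_n_L : N.split.n N.L = N.n N.L := by simp [split]

lemma split_W_of_ne_one {i : ℕ} (h : i ≠ 1) (q p : ℕ) :
    N.split.W i q p = signSplit (N.W i (q / 2) (p / 2)) (q + p) :=
  if_neg h

theorem split_preact (x : ℕ → ℝ) :
    ∀ i < N.L, ∀ q, N.split.preact x i q = N.preact x i (q / 2)
  | 0, _, q => by simp [preact, split, act]
  | i + 1, hi, q => by
    have hact (p : ℕ) : N.split.act x (i + 1) p = N.act x (i + 1) (p / 2) := by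
      rw [act_succ, act_succ, split_preact x i (by omega) p]
    simp only [preact, hact, N.split_n_of_pos_of_lt i.succ_pos hi,
      N.split_W_of_ne_one (show i + 1 + 1 ≠ 1 by omega), sum_signSplit_mul_halves]
    rfl

theorem split_out (hL : 1 ≤ N.L) (x : ℕ → ℝ) : N.split.out x = N.out x := by
  rw [out_eq_preact N.split hL, out_eq_preact N hL, split_L, split_preact _ x _ (by omega)]

theorem split_suffixAux_mono :
    ∀ d i, 0 < i → i + d + 1 = N.L → ∀ {u u' : ℕ → ℝ}, AltLE u u' →
      N.split.suffixAux d i u ≤ N.split.suffixAux d i u'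
  | 0, i, h0, _, u, u', h => by
    simp only [suffixAux, N.split_W_of_ne_one (show i + 1 ≠ 1 by omega)]
    refine add_le_add_left (sum_signSplit_mul_le fun p => ?_) _
    simpa using h p
  | d + 1, i, h0, hL, u, u', h => by
    simp only [suffixAux, N.split_W_of_ne_one (show i + 1 ≠ 1 by omega)]
    exact split_suffixAux_mono d (i + 1) (by omega) (by omega) (h.relu_layer _ _ _)

theorem split_suffix_mono {i : ℕ} (h0 : 0 < i) (hi : i < N.L) {u u' : ℕ → ℝ}
    (h : AltLE u u') :
    N.split.suffix i u ≤ N.split.suffix i u' :=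
  N.split_suffixAux_mono _ i h0 (by simp only [split_L]; omega) h

theorem split_inc_or_dec {i : ℕ} (h0 : 0 < i) (hi : i < N.L) (j : ℕ) :
    N.split.Inc i j ∨ N.split.Dec i j := by
  by_cases hj : Even j
  · exact .inl fun u _ _ ha =>
      N.split_suffix_mono h0 hi (altLE_update u ⟨fun _ => ha, absurd hj⟩)
  · exact .inr fun u _ _ ha =>
      N.split_suffix_mono h0 hi (altLE_update u ⟨(absurd · hj), fun _ => ha⟩)

end Net

theorem statement_0_general (N : Net) (hL : 1 ≤ N.L) :
    ∃ N' : Net,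
      N'.L = N.L ∧
      N'.n 0 = N.n 0 ∧
      N'.n N'.L = N.n N.L ∧
      (∀ i, 1 ≤ i → i < N.L → N'.n i ≤ 2 * N.n i) ∧
      (∀ x : ℕ → ℝ, N'.out x = N.out x) ∧
      (∀ i j, 1 ≤ i → i < N.L → j < N'.n i → N'.Inc i j ∨ N'.Dec i j) :=
  ⟨N.split, rfl, N.split_n_zero, N.split_n_L, fun _ h0 hi => (N.split_n_of_pos_of_lt h0 hi).le,
    N.split_out hL, fun _ j h0 hi _ => N.split_inc_or_dec h0 hi j⟩

/-- preprocessing / classification, Lemma 1.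
For every fully connected ReLU network `N` with a single output neuron there
is a network `N'` with the same number of layers computing the same function,
whose hidden layers are at most twice as large, and in which every hidden
neuron is classified `inc` or `dec`. -/
theorem statement_0 (N : Net) (hL : 1 ≤ N.L) (hout : N.n N.L = 1) :
    ∃ N' : Net,
      N'.L = N.L ∧
      N'.n 0 = N.n 0 ∧
      N'.n N'.L = N.n N.L ∧
      (∀ i, 1 ≤ i → i < N.L → N'.n i ≤ 2 * N.n i) ∧
      (∀ x : ℕ → ℝ, N'.out x = N.out x) ∧
      (∀ i j, 1 ≤ i → i < N.L → j < N'.n i → N'.Inc i j ∨ N'.Dec i j) :=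
  statement_0_general N hL
end
end

section
/- Let N be a fully connected ReLU network, P ⊆ ℝ^{n_0} a set of admissible inputs, (i,j) a hidden neuron of N, a ∈ ℝ, and let N̄ be the Freeze of (i,j) with constant a. Suppose either (inc case) neuron (i,j) is inc and v_{i,j}(x) ≤ a for every x ∈ P, or (dec case) neuron (i,j) is dec and a ≤ v_{i,j}(x) for every x ∈ P. Then N̄(x) ≥ N(x) for every x ∈ P. -/
noncomputable section

/-- The Freeze of hidden neuron `(i, j)` with constant `a`: every incoming
weight of the neuron is set to `0` and its bias is set to `a`; all other
weights and biases are unchanged. -/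
def Net.freeze (N : Net) (i j : ℕ) (a : ℝ) : Net where
  L := N.L
  n := N.n
  W := fun m q p => if m = i ∧ q = j then 0 else N.W m q p
  b := fun m q => if m = i ∧ q = j then a else N.b m q

lemma freeze_act_lt (N : Net) (i j : ℕ) (a : ℝ) (x : ℕ → ℝ) :
    ∀ m, m < i → (N.freeze i j a).act x m = N.act x m := by
  intro m
  induction m with
  | zero => intro _; rfl
  | succ m ih =>
    intro h
    have hm : m < i := Nat.lt_of_succ_lt h
    have hne : m + 1 ≠ i := Nat.ne_of_lt h
    funext q
    simp only [Net.act, ih hm]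
    simp [Net.freeze, hne]

lemma freeze_act_eq (N : Net) (i j : ℕ) (a : ℝ) (x : ℕ → ℝ) (hi : 1 ≤ i) :
    (N.freeze i j a).act x i = Function.update (N.act x i) j (relu a) := by
  obtain ⟨m, rfl⟩ : ∃ m, i = m + 1 := ⟨i - 1, (Nat.succ_pred_eq_of_pos hi).symm⟩
  funext q
  by_cases hq : q = j
  · subst hq
    simp [Net.act, Net.freeze, Function.update_self]
  · rw [Function.update_of_ne hq]
    simp only [Net.act]
    rw [freeze_act_lt N (m + 1) j a x m (Nat.lt_succ_self m)]
    simp [Net.freeze, hq]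

lemma freeze_suffixAux (N : Net) (i j : ℕ) (a : ℝ) :
    ∀ d m, i ≤ m → ∀ u, (N.freeze i j a).suffixAux d m u = N.suffixAux d m u := by
  intro d
  induction d with
  | zero =>
    intro m hm u
    have hne : m + 1 ≠ i := by omega
    simp [Net.suffixAux, Net.freeze, hne]
  | succ d ih =>
    intro m hm u
    have hne : m + 1 ≠ i := by omega
    simp only [Net.suffixAux]
    rw [ih (m + 1) (by omega)]
    simp [Net.freeze, hne]

lemma out_eq_suffixAux (N : Net) (hL : 1 ≤ N.L) (x : ℕ → ℝ) :
    ∀ d m, m + d = N.L - 1 → N.suffixAux d m (N.act x m) = N.out x := by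
  intro d
  induction d with
  | zero =>
    intro m hm
    have hm' : m = N.L - 1 := by omega
    subst hm'
    have : N.L - 1 + 1 = N.L := by omega
    simp [Net.suffixAux, Net.out, this]
  | succ d ih =>
    intro m hm
    simp only [Net.suffixAux]
    have : (fun q => relu ((∑ p ∈ Finset.range (N.n m), N.W (m + 1) q p * N.act x m p)
        + N.b (m + 1) q)) = N.act x (m + 1) := rfl
    rw [this]
    exact ih (m + 1) (by omega)

lemma act_nonneg (N : Net) (x : ℕ → ℝ) (m q : ℕ) : 0 ≤ N.act x (m + 1) q :=
  le_max_right _ _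

/-- Lemma 3, soundness of Freeze.
Freezing an `inc` hidden neuron with an upper bound of its value over the
admissible inputs `P`, or a `dec` hidden neuron with a lower bound of its
value over `P`, yields an over-approximation on `P`. -/
theorem statement_8 (N : Net) (hL : 1 ≤ N.L) (hout : N.n N.L = 1)
    (P : Set (ℕ → ℝ)) (i j : ℕ)
    (hi : 1 ≤ i) (hiL : i < N.L) (hj : j < N.n i) (a : ℝ)
    (hcase :
      (N.Inc i j ∧ ∀ x ∈ P, N.act x i j ≤ a) ∨
      (N.Dec i j ∧ ∀ x ∈ P, a ≤ N.act x i j)) :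
    ∀ x ∈ P, N.out x ≤ (N.freeze i j a).out x := by
  intro x hx
  set v := N.act x i with hv
  have hiL1 : i + (N.L - 1 - i) = N.L - 1 := by omega
  have hout1 : N.out x = N.suffix i v :=
    (out_eq_suffixAux N hL x (N.L - 1 - i) i hiL1).symm
  have hout2 : (N.freeze i j a).out x
      = N.suffix i (Function.update v j (relu a)) := by
    have h1 := out_eq_suffixAux (N.freeze i j a) hL x (N.L - 1 - i) i hiL1
    rw [← h1, freeze_act_eq N i j a x hi, freeze_suffixAux N i j a _ i le_rfl]
    rfl
  rw [hout1, hout2]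
  rcases hcase with ⟨hinc, hbd⟩ | ⟨hdec, hbd⟩
  · have h1 : v j ≤ relu a := le_trans (hbd x hx) (le_max_left a 0)
    have := hinc v (v j) (relu a) h1
    rwa [Function.update_eq_self] at this
  · have h0 : 0 ≤ v j := by
      obtain ⟨m, rfl⟩ : ∃ m, i = m + 1 := ⟨i - 1, (Nat.succ_pred_eq_of_pos hi).symm⟩
      exact act_nonneg N x m j
    have h1 : relu a ≤ v j := max_le (hbd x hx) h0
    have := hdec v (relu a) (v j) h1
    rwa [Function.update_eq_self] at this
end
end

section
/- Let N and M be fully connected ReLU networks, P ⊆ ℝ^{n_0} a set of admissible inputs, and (i,j) a hidden neuron of N. Let a ∈ ℝ be a bound computed with respect to M (an upper bound for inc neurons, a lower bound for dec neurons), and let N̄ be the Freeze of neuron (i,j) of N with constant a (the qFreeze with respect to M). If neuron (i,j) is inc in N and a is also an upper bound of v_{i,j}(x) in N for every x ∈ P, or neuron (i,j) is dec in N and a is also a lower bound of v_{i,j}(x) in N for every x ∈ P, then N̄(x) ≥ N(x) for every x ∈ P. -/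
noncomputable section

/-!
Only layers `≤ i` of the network change under the Freeze, so `N̄(x)` is the suffix function
`S_i` of `N` evaluated at `v_i(x)` with its `j`-th coordinate replaced by `σ(a)`, while
`N(x) = S_i(v_i(x))`. For an `inc` neuron, `0 ≤ v_{i,j}(x) ≤ a` gives `σ(a) = a ≥ v_{i,j}(x)`;
for a `dec` neuron, `a ≤ v_{i,j}(x)` and `0 ≤ v_{i,j}(x)` give `σ(a) ≤ v_{i,j}(x)`. In both
cases monotonicity of `S_i` in coordinate `j` yields `N(x) ≤ N̄(x)`.
-/

lemma MonoIncAt.le_update {f : (ℕ → ℝ) → ℝ} {j : ℕ} (hf : MonoIncAt f j) {u : ℕ → ℝ} {c : ℝ}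
    (hc : u j ≤ c) : f u ≤ f (Function.update u j c) := by
  simpa using hf u (u j) c hc

lemma MonoDecAt.le_update {f : (ℕ → ℝ) → ℝ} {j : ℕ} (hf : MonoDecAt f j) {u : ℕ → ℝ} {c : ℝ}
    (hc : c ≤ u j) : f u ≤ f (Function.update u j c) := by
  simpa using hf u c (u j) hc

lemma relu_nonneg (t : ℝ) : 0 ≤ relu t := le_max_right t 0

namespace Net

lemma act_nonneg (N : Net) (x : ℕ → ℝ) {i : ℕ} (hi : 1 ≤ i) (q : ℕ) : 0 ≤ N.act x i q := by
  obtain ⟨k, rfl⟩ : ∃ k, i = k + 1 := ⟨i - 1, by omega⟩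
  exact relu_nonneg _

lemma suffixAux_act (N : Net) (x : ℕ → ℝ) (d : ℕ) :
    ∀ i, i + d + 1 = N.L → N.suffixAux d i (N.act x i) = N.out x := by
  induction d with
  | zero =>
    intro i h
    rw [suffixAux, out, show N.L = i + 1 by omega]
    rfl
  | succ d ih =>
    intro i h
    exact ih (i + 1) (by omega)

lemma suffix_act (N : Net) (x : ℕ → ℝ) {i : ℕ} (hi : i < N.L) :
    N.suffix i (N.act x i) = N.out x :=
  N.suffixAux_act x _ i (by omega)

variable (N : Net) (i j : ℕ) (a : ℝ)

lemma freeze_W_of_ne {m : ℕ} (q p : ℕ) (h : m ≠ i) : (N.freeze i j a).W m q p = N.W m q p := by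
  simp [freeze, h]

lemma freeze_b_of_ne {m : ℕ} (q : ℕ) (h : m ≠ i) : (N.freeze i j a).b m q = N.b m q := by
  simp [freeze, h]

lemma affine_freeze_of_ne {m : ℕ} (h : m ≠ i) (k q : ℕ) (u : ℕ → ℝ) :
    (∑ p ∈ Finset.range k, (N.freeze i j a).W m q p * u p) + (N.freeze i j a).b m q =
      (∑ p ∈ Finset.range k, N.W m q p * u p) + N.b m q := by
  simp only [freeze_W_of_ne N i j a _ _ h, freeze_b_of_ne N i j a _ h]

lemma suffixAux_freeze (d : ℕ) :
    ∀ i', i ≤ i' → (N.freeze i j a).suffixAux d i' = N.suffixAux d i' := by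
  induction d with
  | zero =>
    intro i' h
    funext u
    exact affine_freeze_of_ne N i j a (by omega) _ _ u
  | succ d ih =>
    intro i' h
    funext u
    simp only [suffixAux, ih (i' + 1) (by omega), affine_freeze_of_ne N i j a (m := i' + 1)
      (by omega)]
    rfl

lemma suffix_freeze : (N.freeze i j a).suffix i = N.suffix i :=
  N.suffixAux_freeze i j a _ i le_rfl

lemma act_freeze_of_lt (x : ℕ → ℝ) (m : ℕ) : m < i → (N.freeze i j a).act x m = N.act x m := by
  induction m with
  | zero => intro _; rfl
  | succ m ih =>
    intro h
    funext q
    simp only [act, ih (by omega), affine_freeze_of_ne N i j a (m := m + 1) (by omega)]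
    rfl

lemma act_freeze_self (x : ℕ → ℝ) (hi : 1 ≤ i) :
    (N.freeze i j a).act x i = Function.update (N.act x i) j (relu a) := by
  obtain ⟨k, rfl⟩ : ∃ k, i = k + 1 := ⟨i - 1, by omega⟩
  funext q
  by_cases hq : q = j
  · subst hq
    simp [act, freeze]
  · have hprev := N.act_freeze_of_lt (k + 1) j a x k (by omega)
    simp only [act, Function.update_of_ne hq, hprev]
    simp [freeze, hq]

lemma out_freeze (x : ℕ → ℝ) (hi : 1 ≤ i) (hiL : i < N.L) :
    (N.freeze i j a).out x = N.suffix i (Function.update (N.act x i) j (relu a)) := by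
  rw [← (N.freeze i j a).suffix_act x (i := i) hiL, suffix_freeze, N.act_freeze_self i j a x hi]

lemma out_le_out_freeze_of_inc (hinc : N.Inc i j) (x : ℕ → ℝ) (hi : 1 ≤ i) (hiL : i < N.L)
    (ha : N.act x i j ≤ a) : N.out x ≤ (N.freeze i j a).out x := by
  have hrelu : relu a = a := max_eq_left ((N.act_nonneg x hi j).trans ha)
  rw [out_freeze N i j a x hi hiL, hrelu, ← N.suffix_act x hiL]
  exact hinc.le_update ha

lemma out_le_out_freeze_of_dec (hdec : N.Dec i j) (x : ℕ → ℝ) (hi : 1 ≤ i) (hiL : i < N.L)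
    (ha : a ≤ N.act x i j) : N.out x ≤ (N.freeze i j a).out x := by
  rw [out_freeze N i j a x hi hiL, ← N.suffix_act x hiL]
  exact hdec.le_update (max_le ha (N.act_nonneg x hi j))

end Net

theorem statement_11_general (N M : Net)
    (P : Set (ℕ → ℝ)) (i j : ℕ)
    (hi : 1 ≤ i) (hiLN : i < N.L) (a : ℝ)
    (hcase :
      (N.Inc i j ∧ (∀ x ∈ P, M.act x i j ≤ a) ∧ (∀ x ∈ P, N.act x i j ≤ a)) ∨
      (N.Dec i j ∧ (∀ x ∈ P, a ≤ M.act x i j) ∧ (∀ x ∈ P, a ≤ N.act x i j))) :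
    ∀ x ∈ P, N.out x ≤ (N.freeze i j a).out x := by
  intro x hx
  rcases hcase with ⟨hinc, -, hub⟩ | ⟨hdec, -, hlb⟩
  · exact N.out_le_out_freeze_of_inc i j a hinc x hi hiLN (hub x hx)
  · exact N.out_le_out_freeze_of_dec i j a hdec x hi hiLN (hlb x hx)

/-- Lemma 6, soundness of the generalized Freeze `qFreeze`.
Freezing a neuron `(i, j)` of `N` with a constant `a` that is a bound computed
with respect to another network `M` (an upper bound for `inc` neurons, a lower
bound for `dec` neurons) is sound, provided `a` is also a corresponding bound
of the neuron's value in `N` itself over the admissible inputs `P`. -/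
theorem statement_11 (N M : Net)
    (hLN : 1 ≤ N.L) (houtN : N.n N.L = 1) (hLM : 1 ≤ M.L) (houtM : M.n M.L = 1)
    (P : Set (ℕ → ℝ)) (i j : ℕ)
    (hi : 1 ≤ i) (hiLN : i < N.L) (hjN : j < N.n i)
    (hiLM : i < M.L) (hjM : j < M.n i) (a : ℝ)
    (hcase :
      (N.Inc i j ∧ (∀ x ∈ P, M.act x i j ≤ a) ∧ (∀ x ∈ P, N.act x i j ≤ a)) ∨
      (N.Dec i j ∧ (∀ x ∈ P, a ≤ M.act x i j) ∧ (∀ x ∈ P, a ≤ N.act x i j))) :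
    ∀ x ∈ P, N.out x ≤ (N.freeze i j a).out x :=
  statement_11_general N M P i j hi hiLN a hcase
end
end
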